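/- Let p > 2 be a real number. The function ψ_p(s) = ∫₀^s ψ'(t)^{(p−2)/(p−1)} dt is odd, strictly increasing, and is a bijection from ℝ onto ℝ (in particular its image is all of ℝ). -/
import Mathlib

/-- The derivative ψ'(s) = 1/((1+ln(1+|s|))²(1+|s|)). -/
noncomputable def psi' (s : ℝ) : ℝ :=
  1 / ((1 + Real.log (1 + |s|)) ^ 2 * (1 + |s|))

/-- ψ_p(s) = ∫₀^s ψ'(t)^((p−2)/(p−1)) dt. -/
noncomputable def psip (p s : ℝ) : ℝ :=
  ∫ t in (0:ℝ)..s, (psi' t) ^ ((p - 2) / (p - 1))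

open Real Filter intervalIntegral

lemma abs_add_one_pos (s : ℝ) : (0:ℝ) < 1 + |s| := by positivity

lemma one_add_log_pos (s : ℝ) : (0:ℝ) < 1 + Real.log (1 + |s|) := by
  have : 0 ≤ Real.log (1 + |s|) := Real.log_nonneg (by simp [abs_nonneg])
  linarith

lemma psi'_pos (s : ℝ) : 0 < psi' s := by
  unfold psi'
  have h1 := one_add_log_pos s
  have h2 := abs_add_one_pos s
  positivity

lemma psi'_continuous : Continuous psi' := by
  unfold psi'
  apply Continuous.div continuous_const
  · exact ((continuous_const.add ((continuous_const.add continuous_abs).log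
        (fun x => (abs_add_one_pos x).ne'))).pow 2).mul
        (continuous_const.add continuous_abs)
  · intro s
    have h1 := one_add_log_pos s
    have h2 := abs_add_one_pos s
    positivity

/-- Key pointwise lower bound: psi' t ≥ K (1+|t|)^{-(1+2ε)}. -/
lemma psi'_lower (ε : ℝ) (hε : 0 < ε) (t : ℝ) :
    (ε ^ 2 / Real.exp (2 * ε)) * (1 + |t|) ^ (-(1 + 2 * ε)) ≤ psi' t := by
  set u : ℝ := 1 + |t| with hu
  have hu0 : (0:ℝ) < u := abs_add_one_pos t
  set K : ℝ := ε ^ 2 / Real.exp (2 * ε) with hK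
  have hK0 : 0 < K := by positivity
  have hlogpos := one_add_log_pos t
  have hlog : 1 + Real.log u ≤ (Real.exp 1 * u) ^ ε / ε := by
    have h1 : 1 + Real.log u = Real.log (Real.exp 1 * u) := by
      rw [Real.log_mul (Real.exp_ne_zero 1) hu0.ne', Real.log_exp]
    rw [h1]
    exact Real.log_le_rpow_div (by positivity) hε
  have hsq : (1 + Real.log u) ^ 2 ≤ ((Real.exp 1 * u) ^ ε) ^ 2 / ε ^ 2 := by
    rw [← div_pow]
    exact pow_le_pow_left₀ hlogpos.le hlog 2
  have heq : ((Real.exp 1 * u) ^ ε) ^ 2 / ε ^ 2 * u = u ^ (1 + 2 * ε) / K := by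
    rw [← Real.rpow_natCast ((Real.exp 1 * u) ^ ε) 2, ← Real.rpow_mul (by positivity),
      Real.mul_rpow (Real.exp_pos 1).le hu0.le, Real.exp_one_rpow, hK]
    push_cast
    rw [show ε * 2 = 2 * ε by ring, Real.rpow_add hu0, Real.rpow_one]
    have hx : u ^ (2 * ε) ≠ 0 := (Real.rpow_pos_of_pos hu0 _).ne'
    field_simp
  have hden : (1 + Real.log u) ^ 2 * u ≤ u ^ (1 + 2 * ε) / K := by
    calc (1 + Real.log u) ^ 2 * u ≤ (((Real.exp 1 * u) ^ ε) ^ 2 / ε ^ 2) * u :=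
          mul_le_mul_of_nonneg_right hsq hu0.le
      _ = u ^ (1 + 2 * ε) / K := heq
  have hDpos : 0 < (1 + Real.log u) ^ 2 * u := by positivity
  unfold psi'
  rw [le_div_iff₀ hDpos]
  calc K * u ^ (-(1 + 2 * ε)) * ((1 + Real.log u) ^ 2 * u)
      ≤ K * u ^ (-(1 + 2 * ε)) * (u ^ (1 + 2 * ε) / K) := by
        apply mul_le_mul_of_nonneg_left hden
        positivity
    _ = 1 := by
        have hx : u ^ (1 + 2 * ε) ≠ 0 := (Real.rpow_pos_of_pos hu0 _).ne'
        rw [Real.rpow_neg hu0.le]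
        field_simp

theorem stmt_4 (p : ℝ) (hp : 2 < p) :
    (∀ s : ℝ, psip p (-s) = - psip p s) ∧
    StrictMono (psip p) ∧
    Function.Bijective (psip p) := by
  set α := (p - 2) / (p - 1) with hαdef
  have hp1 : (0:ℝ) < p - 1 := by linarith
  have hα0 : 0 < α := div_pos (by linarith) hp1
  have hα1 : α < 1 := (div_lt_one hp1).2 (by linarith)
  set f : ℝ → ℝ := fun t => psi' t ^ α with hfdef
  have hfc : Continuous f := psi'_continuous.rpow_const (fun x => Or.inr hα0.le)
  have hfpos : ∀ t, 0 < f t := fun t => Real.rpow_pos_of_pos (psi'_pos t) α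
  have hInt : ∀ a b : ℝ, IntervalIntegrable f MeasureTheory.volume a b :=
    fun a b => hfc.intervalIntegrable a b
  have hpsip : ∀ s, psip p s = ∫ t in (0:ℝ)..s, f t := fun s => rfl
  -- oddness
  have hodd : ∀ s : ℝ, psip p (-s) = - psip p s := by
    intro s
    rw [hpsip, hpsip]
    have h1 : (∫ t in (0:ℝ)..(-s), f t) = ∫ t in (0:ℝ)..(-s), f (-t) := by
      apply intervalIntegral.integral_congr
      intro t _
      simp [hfdef, psi', abs_neg]
    rw [h1, intervalIntegral.integral_comp_neg, neg_zero,
      intervalIntegral.integral_symm]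
    rw [neg_neg]
  -- strict mono
  have hmono : StrictMono (psip p) := by
    intro a b hab
    have hsum : psip p a + ∫ t in a..b, f t = psip p b := by
      rw [hpsip, hpsip]
      exact intervalIntegral.integral_add_adjacent_intervals (hInt 0 a) (hInt a b)
    have hpos : 0 < ∫ t in a..b, f t :=
      intervalIntegral.intervalIntegral_pos_of_pos (hInt a b) hfpos hab
    linarith
  refine ⟨hodd, hmono, hmono.injective, ?_⟩
  -- surjectivity
  have hcont : Continuous (psip p) := by
    have := intervalIntegral.continuous_primitive hInt 0
    exact this
  -- lower bound on f
  set ε : ℝ := (1 - α) / (4 * α) with hεdef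
  have hε : 0 < ε := div_pos (by linarith) (by linarith)
  set β : ℝ := α * (1 + 2 * ε) with hβdef
  have hβeq : β = (1 + α) / 2 := by
    rw [hβdef, hεdef]; field_simp; ring
  have hβ1 : β < 1 := by rw [hβeq]; linarith
  have hβ0 : 0 < β := by rw [hβeq]; linarith
  set K : ℝ := ε ^ 2 / Real.exp (2 * ε) with hKdef
  have hK : 0 < K := by positivity
  set c : ℝ := K ^ α with hcdef
  have hc : 0 < c := Real.rpow_pos_of_pos hK α
  have key : ∀ t : ℝ, c * (1 + |t|) ^ (-β) ≤ f t := by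
    intro t
    have hu0 : (0:ℝ) < 1 + |t| := abs_add_one_pos t
    have h1 : (K * (1 + |t|) ^ (-(1 + 2 * ε))) ^ α ≤ f t :=
      Real.rpow_le_rpow (by positivity) (psi'_lower ε hε t) hα0.le
    calc c * (1 + |t|) ^ (-β) = (K * (1 + |t|) ^ (-(1 + 2 * ε))) ^ α := by
          rw [Real.mul_rpow hK.le (by positivity), ← Real.rpow_mul hu0.le,
            show -(1 + 2 * ε) * α = -β by rw [hβdef]; ring, hcdef]
      _ ≤ f t := h1
  -- integral lower bound for x ≥ 0
  set g : ℝ → ℝ := fun t => c * (1 + |t|) ^ (-β) with hgdef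
  have hgc : Continuous g := by
    apply continuous_const.mul
    exact (continuous_const.add continuous_abs).rpow_const
      (fun x => Or.inl (abs_add_one_pos x).ne')
  have hLB : ∀ x : ℝ, 0 ≤ x →
      c * (((1 + x) ^ (1 - β) - 1) / (1 - β)) ≤ psip p x := by
    intro x hx
    have h1 : (∫ t in (0:ℝ)..x, g t) ≤ psip p x := by
      rw [hpsip]
      apply intervalIntegral.integral_mono_on hx (hgc.intervalIntegrable 0 x)
        (hInt 0 x)
      intro t _
      exact key t
    have h2 : (∫ t in (0:ℝ)..x, g t) = c * (((1 + x) ^ (1 - β) - 1) / (1 - β)) := by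
      have hcg : ∀ t ∈ Set.uIcc (0:ℝ) x, g t = c * (1 + t) ^ (-β) := by
        intro t ht
        rw [Set.uIcc_of_le hx] at ht
        rw [hgdef]
        simp only
        rw [abs_of_nonneg ht.1]
      rw [intervalIntegral.integral_congr hcg, intervalIntegral.integral_const_mul]
      congr 1
      have h3 : (∫ t in (0:ℝ)..x, (1 + t) ^ (-β)) = ∫ t in (1:ℝ)..(1 + x), t ^ (-β) := by
        have := intervalIntegral.integral_comp_add_left (fun t => t ^ (-β)) 1
          (a := (0:ℝ)) (b := x)
        simpa using this
      rw [h3, integral_rpow (Or.inl (by linarith))]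
      rw [Real.one_rpow]
      ring_nf
    linarith [h2 ▸ h1]
  -- tendsto atTop
  have htop : Tendsto (psip p) atTop atTop := by
    apply tendsto_atTop_mono' atTop
      (eventually_atTop.2 ⟨0, fun x hx => hLB x hx⟩)
    apply Tendsto.const_mul_atTop hc
    apply Tendsto.atTop_div_const (by linarith : (0:ℝ) < 1 - β)
    apply tendsto_atTop_add_const_right
    exact (tendsto_rpow_atTop (by linarith : (0:ℝ) < 1 - β)).comp
      (tendsto_atTop_add_const_left _ 1 tendsto_id)
  have hbot : Tendsto (psip p) atBot atBot := by
    have h1 : psip p = fun x => - psip p (-x) := by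
      funext x
      rw [hodd, neg_neg]
    rw [h1]
    exact tendsto_neg_atTop_atBot.comp (htop.comp tendsto_neg_atBot_atTop)
  exact hcont.surjective htop hbot
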